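/- The sequence E(n) = 2√π·(n/(2e))^{n/2}/Γ((n+1)/2) of entropies of round spheres converges to √2 as n → ∞. -/

import Mathlib

/-!
Split by parity. For `n = 2m` the Gamma value is `Γ(m + 1/2) = (2m)! √π / (4^m m!)`, which turns
`E(2m)` into `√2 · s(m) / s(2m)`, where `s(n) = n! / (√(2n) (n/e)^n) → √π` is Stirling's sequence.
For `n = 2m + 1` it is `m!`, and
`E(2m+1) = √2 · (√π / s(m)) · (1 + 1/(2m))^m e^{-1/2} · √(1 + 1/(2m))`,
in which every factor after `√2` tends to `1`.
-/

/-- Stone's formula for the entropy of the round `n`-sphere (with `0 ^ 0 = 1`). -/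
noncomputable def sphereEntropy (n : ℕ) : ℝ :=
  2 * Real.sqrt Real.pi * ((n : ℝ) / (2 * Real.exp 1)) ^ ((n : ℝ) / 2) /
    Real.Gamma (((n : ℝ) + 1) / 2)

open Real Filter Topology Stirling
open scoped Nat

theorem Nat.factorial_two_mul (m : ℕ) : (2 * m)! = 2 ^ m * m ! * (2 * m - 1)‼ := by
  cases m with
  | zero => rfl
  | succ k =>
    rw [← Nat.doubleFactorial_two_mul, show 2 * (k + 1) = 2 * k + 1 + 1 by ring,
      Nat.factorial_eq_mul_doubleFactorial]
    rfl

theorem Real.Gamma_nat_add_half_eq_factorial (m : ℕ) :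
    Gamma (m + 1 / 2) = (2 * m)! * √π / (4 ^ m * m !) := by
  rw [Gamma_nat_add_half, Nat.factorial_two_mul, show (4 : ℝ) ^ m = 2 ^ m * 2 ^ m by
    rw [← mul_pow]; norm_num]
  push_cast
  field_simp

theorem Stirling.factorial_eq_stirlingSeq_mul {n : ℕ} (hn : n ≠ 0) :
    (n ! : ℝ) = stirlingSeq n * (√(2 * n) * (n / exp 1) ^ n) := by
  rw [stirlingSeq, div_mul_cancel₀]
  positivity

theorem Filter.Tendsto.of_comp_two_mul_of_comp_two_mul_add_one {α : Type*} {f : ℕ → α}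
    {l : Filter α} (h₀ : Tendsto (fun n ↦ f (2 * n)) atTop l)
    (h₁ : Tendsto (fun n ↦ f (2 * n + 1)) atTop l) : Tendsto f atTop l := by
  intro s hs
  obtain ⟨N₀, hN₀⟩ := eventually_atTop.mp (h₀ hs)
  obtain ⟨N₁, hN₁⟩ := eventually_atTop.mp (h₁ hs)
  refine eventually_atTop.mpr ⟨2 * max N₀ N₁, fun n hn ↦ ?_⟩
  obtain ⟨k, rfl | rfl⟩ := Nat.even_or_odd' n
  · exact hN₀ k (by omega)
  · exact hN₁ k (by omega)

theorem sphereEntropy_two_mul (m : ℕ) :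
    sphereEntropy (2 * m) = 2 * 4 ^ m * m ! * (m / exp 1) ^ m / (2 * m)! := by
  have harg : ((2 * m : ℕ) + 1 : ℝ) / 2 = m + 1 / 2 := by push_cast; ring
  have hbase : ((2 * m : ℕ) : ℝ) / (2 * exp 1) = m / exp 1 := by push_cast; field_simp
  have hexp : ((2 * m : ℕ) : ℝ) / 2 = m := by push_cast; ring
  rw [sphereEntropy, harg, hbase, hexp, rpow_natCast, Gamma_nat_add_half_eq_factorial]
  field_simp

theorem sphereEntropy_two_mul_add_one (m : ℕ) :
    sphereEntropy (2 * m + 1) = 2 * √π * ((m + 1 / 2) / exp 1) ^ (m + 1 / 2 : ℝ) / m ! := by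
  have harg : ((2 * m + 1 : ℕ) + 1 : ℝ) / 2 = m + 1 := by push_cast; ring
  have hbase : ((2 * m + 1 : ℕ) : ℝ) / (2 * exp 1) = (m + 1 / 2) / exp 1 := by
    push_cast; field_simp
  have hexp : ((2 * m + 1 : ℕ) : ℝ) / 2 = m + 1 / 2 := by push_cast; ring
  rw [sphereEntropy, harg, hbase, hexp, Gamma_nat_eq_factorial]

theorem sphereEntropy_two_mul_eq_stirlingSeq {m : ℕ} (hm : m ≠ 0) :
    sphereEntropy (2 * m) = √2 * stirlingSeq m / stirlingSeq (2 * m) := by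
  rw [sphereEntropy_two_mul, factorial_eq_stirlingSeq_mul hm,
    factorial_eq_stirlingSeq_mul (by positivity)]
  have hpow : ((2 * m : ℕ) / exp 1 : ℝ) ^ (2 * m) = 4 ^ m * ((m / exp 1) ^ m) ^ 2 := by
    push_cast
    rw [mul_div_assoc, mul_pow, pow_mul, pow_mul']
    norm_num
  have hsqrt : √(2 * (2 * m : ℕ) : ℝ) = √2 * √(2 * m) := by
    push_cast; rw [← sqrt_mul zero_le_two]
  rw [hpow, hsqrt]
  field_simp
  rw [sq_sqrt zero_le_two]
  ring

theorem sphereEntropy_two_mul_add_one_eq_stirlingSeq {m : ℕ} (hm : m ≠ 0) :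
    sphereEntropy (2 * m + 1) = √2 * (√π / stirlingSeq m) *
      ((1 + (1 / 2) / m) ^ m / exp (1 / 2)) * √(1 + (1 / 2) / m) := by
  have hbase : ((m : ℝ) + 1 / 2) / exp 1 = m / exp 1 * (1 + (1 / 2) / m) := by
    field_simp
  rw [sphereEntropy_two_mul_add_one, factorial_eq_stirlingSeq_mul hm, hbase,
    rpow_add (by positivity), rpow_natCast, ← sqrt_eq_rpow, mul_pow, sqrt_mul (by positivity),
    sqrt_div' _ (exp_pos 1).le, exp_half, sqrt_mul zero_le_two]
  field_simp
  rw [sq_sqrt zero_le_two]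

theorem tendsto_sphereEntropy_two_mul :
    Tendsto (fun m ↦ sphereEntropy (2 * m)) atTop (𝓝 (√2)) := by
  have hπ : √π ≠ 0 := by positivity
  have hs₂ : Tendsto (fun m ↦ stirlingSeq (2 * m)) atTop (𝓝 √π) :=
    tendsto_stirlingSeq_sqrt_pi.comp (tendsto_id.const_mul_atTop' two_pos)
  have h := (tendsto_stirlingSeq_sqrt_pi.const_mul √2).div hs₂ hπ
  rw [mul_div_assoc, div_self hπ, mul_one] at h
  refine h.congr' ?_
  filter_upwards [eventually_ne_atTop 0] with m hm
  exact (sphereEntropy_two_mul_eq_stirlingSeq hm).symm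

theorem tendsto_sphereEntropy_two_mul_add_one :
    Tendsto (fun m ↦ sphereEntropy (2 * m + 1)) atTop (𝓝 (√2)) := by
  have hπ : √π ≠ 0 := by positivity
  have hstirling : Tendsto (fun m ↦ √π / stirlingSeq m) atTop (𝓝 1) := by
    have h := (tendsto_const_nhds (x := √π)).div tendsto_stirlingSeq_sqrt_pi hπ
    rwa [div_self hπ] at h
  have hexp : Tendsto (fun m : ℕ ↦ (1 + (1 / 2) / m) ^ m / exp (1 / 2)) atTop (𝓝 1) := by
    simpa [(exp_pos _).ne'] using (tendsto_one_add_div_pow_exp (1 / 2)).div_const (exp (1 / 2))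
  have hsqrt : Tendsto (fun m : ℕ ↦ √(1 + (1 / 2) / m)) atTop (𝓝 1) := by
    have h := ((tendsto_const_div_atTop_nhds_zero_nat (1 / 2 : ℝ)).const_add 1).sqrt
    rwa [add_zero, sqrt_one] at h
  have h := ((hstirling.const_mul √2).mul hexp).mul hsqrt
  rw [mul_one, mul_one, mul_one] at h
  refine h.congr' ?_
  filter_upwards [eventually_ne_atTop 0] with m hm
  exact (sphereEntropy_two_mul_add_one_eq_stirlingSeq hm).symm

theorem sphereEntropy_tendsto_sqrt_two :
    Filter.Tendsto sphereEntropy Filter.atTop (nhds (Real.sqrt 2)) :=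
  .of_comp_two_mul_of_comp_two_mul_add_one tendsto_sphereEntropy_two_mul
    tendsto_sphereEntropy_two_mul_add_one
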